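/- (Total coverage gap bound via Jensen) Let S_c = (S_1,…,S_n) be an i.i.d. sample from a distribution P on ℝ and let Q_α(S_c) denote the empirical (1−α)-quantile of the sample. Define Δ(α) = |E_{S_c}[F_P(Q_α(S_c)) − F_Q(Q_α(S_c))]|. Then ∫_0^1 Δ(α) dα ≤ E_{S∼P}[|F_P(S) − F_Q(S)|]. -/

import Mathlib

/-!
For `k / n < α < (k + 1) / n` the empirical `(1 - α)`-quantile is the order statistic
`S_(n-k)`, so integrating over `α` averages over the `n` order statistics. Moving the absolute
value inside the expectation, the average of `E |g (S_(j))|` is the expectation of the average of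
`|g|` over the sorted sample, which is the average over the sample itself, with expectation
`E_P |g|`, here with `g = F_P - F_Q`.
-/

open MeasureTheory Set
open scoped Classical

/-- CDF of a measure on ℝ. -/
noncomputable def F (μ : Measure ℝ) (t : ℝ) : ℝ := (μ (Iic t)).toReal

/-- Empirical `(1−α)`-quantile of a sample `s` of size `n`. -/
noncomputable def empQuantile {n : ℕ} (s : Fin n → ℝ) (α : ℝ) : ℝ :=
  sInf {t : ℝ | 1 - α ≤ ((Finset.univ.filter fun i => s i ≤ t).card : ℝ) / (n : ℝ)}

open Finset ProbabilityTheory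

lemma F_eq_cdf (μ : Measure ℝ) [IsProbabilityMeasure μ] : F μ = cdf μ := by
  funext t
  rw [cdf_eq_real]
  rfl

lemma card_filter_comp_perm {ι : Type*} [Fintype ι] (p : ι → Prop) [DecidablePred p]
    (σ : Equiv.Perm ι) : #{i | p (σ i)} = #{i | p i} := by
  rw [← Fintype.card_subtype, ← Fintype.card_subtype]
  exact Fintype.card_congr (σ.subtypeEquiv fun _ => Iff.rfl)

section OrderStatistics

variable {n : ℕ}

lemma sort_apply_le_iff {α : Type*} [LinearOrder α] (s : Fin n → α) (j : Fin n) (t : α) :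
    s (Tuple.sort s j) ≤ t ↔ (j : ℕ) < #{i | s i ≤ t} := by
  rw [← card_filter_comp_perm (s · ≤ t) (Tuple.sort s)]
  exact (Tuple.lt_card_le_iff_apply_le_of_monotone (Tuple.monotone_sort s)).symm

lemma measurable_card_filter_le (t : ℝ) :
    Measurable fun s : Fin n → ℝ => #{i | s i ≤ t} := by
  simp_rw [card_filter]
  exact Finset.measurable_sum _ fun i _ =>
    Measurable.ite (measurableSet_le (measurable_pi_apply i) measurable_const)
      measurable_const measurable_const

lemma measurable_sort_apply (j : Fin n) :
    Measurable fun s : Fin n → ℝ => s (Tuple.sort s j) := by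
  refine measurable_of_Iic fun t => ?_
  have hpre : (fun s : Fin n → ℝ => s (Tuple.sort s j)) ⁻¹' Iic t
      = {s | (j : ℕ) < #{i | s i ≤ t}} := by
    ext s
    exact sort_apply_le_iff s j t
  rw [hpre]
  exact measurableSet_lt measurable_const (measurable_card_filter_le t)

lemma empQuantile_eq_sort_apply (s : Fin n → ℝ) (k : Fin n) {α : ℝ}
    (hα : α ∈ Ioo ((k : ℝ) / n) ((k + 1 : ℝ) / n)) :
    empQuantile s α = s (Tuple.sort s k.rev) := by
  have hn : (0 : ℝ) < n := by exact_mod_cast k.pos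
  obtain ⟨hlo, hhi⟩ := hα
  rw [div_lt_iff₀ hn] at hlo
  rw [lt_div_iff₀ hn] at hhi
  suffices h : {t : ℝ | 1 - α ≤ (#{i | s i ≤ t} : ℝ) / n} = Ici (s (Tuple.sort s k.rev)) by
    rw [empQuantile, h, csInf_Ici]
  ext t
  rw [mem_ofPred_eq, Set.mem_Ici, sort_apply_le_iff, Fin.val_rev, le_div_iff₀ hn]
  have hk := k.isLt
  -- `#{i | s i ≤ t}` is an integer and `k < α * n < k + 1`
  constructor
  · intro h
    have : (n : ℝ) < #{i | s i ≤ t} + k + 1 := by nlinarith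
    have : n < #{i | s i ≤ t} + k + 1 := by exact_mod_cast this
    omega
  · intro h
    have : (n : ℝ) ≤ #{i | s i ≤ t} + k := by exact_mod_cast (by omega : n ≤ #{i | s i ≤ t} + k)
    nlinarith

end OrderStatistics

lemma intervalIntegral_zero_one_eq_sum_div {n : ℕ} (hn : 0 < n) {f : ℝ → ℝ} {c : Fin n → ℝ}
    (hf : ∀ i : Fin n, EqOn f (fun _ => c i) (Ioo ((i : ℝ) / n) ((i + 1 : ℝ) / n))) :
    ∫ α in (0 : ℝ)..1, f α = (∑ i, c i) / n := by
  have hn' : (0 : ℝ) < n := by exact_mod_cast hn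
  set a : ℕ → ℝ := fun k => k / n with ha
  have ha_succ (k : ℕ) : a (k + 1) = (k + 1 : ℝ) / n := by simp [ha]
  have ha_le (k : ℕ) : a k ≤ a (k + 1) := by
    rw [ha_succ]
    exact div_le_div_of_nonneg_right (by linarith) hn'.le
  have hpiece (i : Fin n) : IntervalIntegrable f volume (a i) (a (i + 1)) ∧
      ∫ α in a i..a (i + 1), f α = c i / n := by
    have hfi : EqOn f (fun _ => c i) (Ioo (a i) (a (i + 1))) := by
      rw [ha_succ]; exact hf i
    refine ⟨?_, ?_⟩
    · rw [intervalIntegrable_iff_integrableOn_Ioc_of_le (ha_le i),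
        integrableOn_Ioc_iff_integrableOn_Ioo]
      exact (integrableOn_const measure_Ioo_lt_top.ne).congr_fun hfi.symm measurableSet_Ioo
    · rw [intervalIntegral.integral_of_le (ha_le i), integral_Ioc_eq_integral_Ioo,
        setIntegral_congr_fun measurableSet_Ioo hfi, setIntegral_const,
        Real.volume_real_Ioo_of_le (ha_le i), ha_succ, smul_eq_mul, ha]
      field_simp
      ring
  calc ∫ α in (0 : ℝ)..1, f α
      = ∑ k ∈ range n, ∫ α in a k..a (k + 1), f α := by
        rw [intervalIntegral.sum_integral_adjacent_intervals fun k hk => (hpiece ⟨k, hk⟩).1]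
        simp [ha, hn'.ne']
    _ = ∑ i : Fin n, c i / n := by
        rw [← Fin.sum_univ_eq_sum_range (fun k => ∫ α in a k..a (k + 1), f α)]
        exact sum_congr rfl fun i _ => (hpiece i).2
    _ = (∑ i, c i) / n := (sum_div _ _ _).symm

lemma integral_sum_comp_eval_pi {α : Type*} [MeasurableSpace α] {n : ℕ} (P : Measure α)
    [IsProbabilityMeasure P] {g : α → ℝ} (hg : Integrable g P) :
    ∫ s, ∑ i, g (s i) ∂(Measure.pi fun _ : Fin n => P) = n * ∫ t, g t ∂P := by
  rw [integral_finsetSum univ fun i _ => ?_]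
  · simp [integral_comp_eval (μ := fun _ => P) hg.aestronglyMeasurable]
  · exact (measurePreserving_eval (fun _ => P) i).integrable_comp_of_integrable hg

lemma integrable_comp_sort_apply {n : ℕ} (P : Measure ℝ) [IsProbabilityMeasure P] {g : ℝ → ℝ}
    (hg : Measurable g) (hgi : Integrable g P) (j : Fin n) :
    Integrable (fun s : Fin n → ℝ => g (s (Tuple.sort s j))) (Measure.pi fun _ => P) := by
  have hsum : Integrable (fun s : Fin n → ℝ => ∑ i, |g (s i)|) (Measure.pi fun _ => P) :=
    integrable_finsetSum _ fun i _ =>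
      ((measurePreserving_eval (fun _ => P) i).integrable_comp_of_integrable hgi).abs
  refine hsum.mono' (hg.comp (measurable_sort_apply j)).aestronglyMeasurable
    (ae_of_all _ fun s => ?_)
  rw [Real.norm_eq_abs]
  exact single_le_sum (f := fun i => |g (s i)|) (fun i _ => abs_nonneg _) (mem_univ _)

theorem integral_abs_integral_comp_empQuantile_le {n : ℕ} (hn : 0 < n) (P : Measure ℝ)
    [IsProbabilityMeasure P] {g : ℝ → ℝ} (hg : Measurable g) (hgi : Integrable g P) :
    ∫ α in (0 : ℝ)..1, |∫ s, g (empQuantile s α) ∂(Measure.pi fun _ : Fin n => P)|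
      ≤ ∫ t, |g t| ∂P := by
  set μ := Measure.pi fun _ : Fin n => P
  rw [intervalIntegral_zero_one_eq_sum_div hn
    (c := fun i => |∫ s : Fin n → ℝ, g (s (Tuple.sort s i.rev)) ∂μ|)
    fun i α hα => by simp only [empQuantile_eq_sort_apply _ i hα]]
  calc (∑ i : Fin n, |∫ s : Fin n → ℝ, g (s (Tuple.sort s i.rev)) ∂μ|) / n
      ≤ (∑ i : Fin n, ∫ s : Fin n → ℝ, |g (s (Tuple.sort s i.rev))| ∂μ) / n := by
        gcongr with i
        exact abs_integral_le_integral_abs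
    _ = (∫ s : Fin n → ℝ, ∑ j, |g (s (Tuple.sort s j))| ∂μ) / n := by
        rw [integral_finsetSum _ fun j _ => (integrable_comp_sort_apply P hg hgi j).abs]
        congr 1
        exact Fintype.sum_equiv Fin.revPerm _ _ fun _ => rfl
    _ = (∫ s : Fin n → ℝ, ∑ i, |g (s i)| ∂μ) / n := by
        congr 1
        exact integral_congr_ae (ae_of_all _ fun s =>
          Equiv.sum_comp (Tuple.sort s) fun i => |g (s i)|)
    _ = ∫ t, |g t| ∂P := by
        rw [integral_sum_comp_eval_pi P hgi.abs]
        field_simp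

theorem stmt5 (P Q : Measure ℝ) [IsProbabilityMeasure P] [IsProbabilityMeasure Q]
    (n : ℕ) (hn : 0 < n) :
    (∫ α in (0:ℝ)..1,
        |∫ s, (F P (empQuantile s α) - F Q (empQuantile s α))
            ∂(Measure.pi fun _ : Fin n => P)|)
      ≤ ∫ t, |F P t - F Q t| ∂P := by
  have hmeas : Measurable fun t => cdf P t - cdf Q t :=
    (cdf P).mono.measurable.sub (cdf Q).mono.measurable
  have hbound (t : ℝ) : |cdf P t - cdf Q t| ≤ 1 :=
    abs_sub_le_of_nonneg_of_le (cdf_nonneg P t) (cdf_le_one P t) (cdf_nonneg Q t) (cdf_le_one Q t)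
  simp only [F_eq_cdf]
  exact integral_abs_integral_comp_empQuantile_le hn P hmeas
    (.of_bound hmeas.aestronglyMeasurable 1 (ae_of_all _ hbound))
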